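/- arXiv:2305.15192 — 4 statements merged into one kernel-verified Lean document; each statement's English description precedes it below -/
import Mathlib

section
/- Let f : 2^V → ℝ be monotone submodular and f(∅)=0. For any sets G, D and any finite family of disjoint sets S₁,…,S_T with G_i = S₁ ∪ ⋯ ∪ S_i and G_0 = ∅, we have f(G_T \ D) ≥ Σ_{i=1}^T f(S_i | G_{i-1}) − Σ_{i=1}^T Σ_{e ∈ D ∩ S_i} f({e} | G_{i-1}). -/
open Finset

lemma marg_aux {V : Type*} [DecidableEq V] (f : Finset V → ℝ)
    (hsub : ∀ A B : Finset V, f (A ∪ B) + f (A ∩ B) ≤ f A + f B)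
    (hmono : ∀ A B : Finset V, A ⊆ B → f A ≤ f B)
    (X A B : Finset V) (hAB : A ⊆ B) :
    f (X ∪ B) - f B ≤ f (X ∪ A) - f A := by
  have h1 := hsub (X ∪ A) B
  have h2 : f A ≤ f ((X ∪ A) ∩ B) := hmono _ _ (subset_inter (subset_union_right) hAB)
  have h3 : (X ∪ A) ∪ B = X ∪ B := by
    apply subset_antisymm
    · intro x hx; simp at hx ⊢; tauto
    · intro x hx; simp at hx ⊢; tauto
  rw [h3] at h1
  linarith

lemma sum_marg_aux {V : Type*} [DecidableEq V] (f : Finset V → ℝ)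
    (hsub : ∀ A B : Finset V, f (A ∪ B) + f (A ∩ B) ≤ f A + f B)
    (hmono : ∀ A B : Finset V, A ⊆ B → f A ≤ f B)
    (C A B : Finset V) (hAB : A ⊆ B) :
    f (C ∪ B) - f B ≤ ∑ e ∈ C, (f (insert e A) - f A) := by
  induction C using Finset.induction with
  | empty => simp
  | insert a C hnotmem ih =>
    rw [Finset.sum_insert hnotmem]
    have h1 : f ({a} ∪ (C ∪ B)) - f (C ∪ B) ≤ f ({a} ∪ A) - f A :=
      marg_aux f hsub hmono {a} A (C ∪ B) (hAB.trans subset_union_right)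
    have h2 : ({a} : Finset V) ∪ (C ∪ B) = insert a C ∪ B := by
      ext x; simp
    have h3 : ({a} : Finset V) ∪ A = insert a A := by ext x; simp
    rw [h2, h3] at h1
    linarith

/-- For disjoint `S₁,…,S_T` with partial unions `G_i`,
`f(G_T \ D) ≥ Σ_i f(S_i | G_{i-1}) − Σ_i Σ_{e ∈ D ∩ S_i} f({e} | G_{i-1})`.
Here `S i` for `i = 0,…,T-1` plays the role of `S_{i+1}` and
`G i = S 0 ∪ ⋯ ∪ S (i-1)`. -/
theorem stmt_2 {V : Type*} [Fintype V] [DecidableEq V] (f : Finset V → ℝ)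
    (hsub : ∀ A B : Finset V, f (A ∪ B) + f (A ∩ B) ≤ f A + f B)
    (hmono : ∀ A B : Finset V, A ⊆ B → f A ≤ f B)
    (hzero : f ∅ = 0)
    (T : ℕ) (S : ℕ → Finset V)
    (hdisj : ∀ i < T, ∀ j < T, i ≠ j → Disjoint (S i) (S j))
    (D : Finset V)
    (G : ℕ → Finset V) (hG : ∀ i, G i = (Finset.range i).biUnion S) :
    f (G T \ D) ≥
      (∑ i ∈ Finset.range T, (f (S i ∪ G i) - f (G i))) -
      ∑ i ∈ Finset.range T, ∑ e ∈ D ∩ S i, (f (insert e (G i)) - f (G i)) := by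
  clear hdisj
  induction T with
  | zero => simp [hG 0, hzero]
  | succ n ih =>
    rw [Finset.sum_range_succ, Finset.sum_range_succ]
    have hGn : G (n+1) = G n ∪ S n := by
      rw [hG (n+1), hG n, Finset.range_add_one, Finset.biUnion_insert, union_comm]
    have key : f (G (n+1) \ D) - f (G n \ D) ≥
        (f (S n ∪ G n) - f (G n)) - ∑ e ∈ D ∩ S n, (f (insert e (G n)) - f (G n)) := by
      have e1 : G (n+1) \ D = (S n \ D) ∪ (G n \ D) := by
        rw [hGn, union_sdiff_distrib, union_comm]
      have step1 : f ((S n \ D) ∪ (G n \ D)) - f (G n \ D) ≥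
          f ((S n \ D) ∪ G n) - f (G n) :=
        marg_aux f hsub hmono (S n \ D) (G n \ D) (G n) (sdiff_subset)
      have e2 : (S n ∩ D) ∪ ((S n \ D) ∪ G n) = S n ∪ G n := by
        ext x; simp; tauto
      have step2 : f (S n ∪ G n) - f ((S n \ D) ∪ G n) ≤
          ∑ e ∈ S n ∩ D, (f (insert e (G n)) - f (G n)) := by
        have := sum_marg_aux f hsub hmono (S n ∩ D) (G n) ((S n \ D) ∪ G n)
          subset_union_right
        rw [e2] at this
        exact this
      have e3 : S n ∩ D = D ∩ S n := inter_comm _ _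
      rw [e3] at step2
      rw [e1]
      linarith
    linarith
end

section
/- Let f : 2^V → ℝ be monotone submodular with f(∅)=0, let G_opt be an optimal set of size at most k with value f(G_opt), let τ = OPT/(2k) where f(G_opt) ≤ OPT ≤ (1+ε)f(G_opt) for some ε ∈ [0,1). If G ⊆ V satisfies f(s|G) < τ for every s ∈ G_opt, then f(G) ≥ ((1−ε)/(1+ε))·(OPT/2). -/
open Finset

lemma marginal_sum {V : Type*} [DecidableEq V] (f : Finset V → ℝ)
    (hsub : ∀ A B : Finset V, f (A ∪ B) + f (A ∩ B) ≤ f A + f B)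
    (hmono : ∀ A B : Finset V, A ⊆ B → f A ≤ f B)
    (A B : Finset V) :
    f (A ∪ B) ≤ f B + ∑ s ∈ A, (f (insert s B) - f B) := by
  induction A using Finset.induction with
  | empty => simp
  | @insert a A ha ih =>
    rw [Finset.sum_insert ha, Finset.insert_union]
    have h1 := hsub (insert a B) (A ∪ B)
    have h2 : f (insert a (A ∪ B)) ≤ f ((insert a B) ∪ (A ∪ B)) := by
      apply hmono
      intro x hx
      simp at hx ⊢
      tauto
    have h3 : f B ≤ f ((insert a B) ∩ (A ∪ B)) := by
      apply hmono
      intro x hx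
      simp [hx]
    linarith

/-- With `τ = OPT/(2k)` and `f(Gopt) ≤ OPT ≤ (1+ε)·f(Gopt)`, if every element of
`Gopt` has marginal gain below `τ` with respect to `G`, then
`f G ≥ ((1−ε)/(1+ε))·(OPT/2)`. -/
theorem stmt_4 {V : Type*} [Fintype V] [DecidableEq V] (f : Finset V → ℝ)
    (hsub : ∀ A B : Finset V, f (A ∪ B) + f (A ∩ B) ≤ f A + f B)
    (hmono : ∀ A B : Finset V, A ⊆ B → f A ≤ f B)
    (hzero : f ∅ = 0)
    (G Gopt : Finset V) (k : ℕ) (hk : 1 ≤ k) (hcard : Gopt.card ≤ k)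
    (ε OPT τ : ℝ) (hε : 0 ≤ ε) (hε1 : ε < 1)
    (hOPT₁ : f Gopt ≤ OPT) (hOPT₂ : OPT ≤ (1 + ε) * f Gopt)
    (hτ : τ = OPT / (2 * k))
    (hgain : ∀ s ∈ Gopt, f (insert s G) - f G < τ) :
    f G ≥ ((1 - ε) / (1 + ε)) * (OPT / 2) := by
  have hfG0 : (0:ℝ) ≤ f Gopt := by
    have := hmono ∅ Gopt (Finset.empty_subset _)
    linarith
  have hO0 : (0:ℝ) ≤ OPT := le_trans hfG0 hOPT₁
  have hτ0 : 0 ≤ τ := by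
    rw [hτ]
    positivity
  have hsum : ∑ s ∈ Gopt, (f (insert s G) - f G) ≤ (Gopt.card : ℝ) * τ := by
    calc ∑ s ∈ Gopt, (f (insert s G) - f G) ≤ ∑ s ∈ Gopt, τ :=
          Finset.sum_le_sum fun s hs => le_of_lt (hgain s hs)
      _ = (Gopt.card : ℝ) * τ := by simp [mul_comm]
  have hcard' : (Gopt.card : ℝ) * τ ≤ (k : ℝ) * τ := by
    apply mul_le_mul_of_nonneg_right _ hτ0
    exact_mod_cast hcard
  have hkτ : (k : ℝ) * τ = OPT / 2 := by
    have hk0 : (k : ℝ) ≠ 0 := by positivity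
    rw [hτ]; field_simp
  have h1 : f Gopt ≤ f (Gopt ∪ G) := hmono _ _ Finset.subset_union_left
  have h2 := marginal_sum f hsub hmono Gopt G
  have hkey : f Gopt ≤ f G + OPT / 2 := by
    rw [← hkτ]; linarith
  have h1ε : (0:ℝ) < 1 + ε := by linarith
  have hlow : OPT / (1 + ε) ≤ f Gopt := by
    rw [div_le_iff₀ h1ε]; linarith [hOPT₂]
  rw [ge_iff_le, div_mul_eq_mul_div, div_le_iff₀ h1ε]
  have : OPT / (1 + ε) ≤ f G + OPT / 2 := le_trans hlow hkey
  rw [div_le_iff₀ h1ε] at this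
  nlinarith
end

section
/- Let X₀, X₁, …, be a sequence of nonnegative integer-valued random variables with X₀ = N fixed, X_i ≤ X_{i−1} almost surely, and E[X_i | X₁=x₁, …, X_{i−1}=x_{i−1}] ≤ (1−ε')·x_{i−1} for all i ≥ 1 and some ε' ∈ (0,1). Let T be the first index with X_T = 0. Then E[T] ≤ C·(log N + 1)/ε'² for some absolute constant C. -/
open MeasureTheory ProbabilityTheory

section aux

variable {Ω : Type} [MeasurableSpace Ω]

lemma my_ae_bound (μ : Measure Ω) (X : ℕ → Ω → ℕ) (N : ℕ)
    (h0 : ∀ᵐ ω ∂μ, X 0 ω = N)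
    (hmono : ∀ i : ℕ, 1 ≤ i → ∀ᵐ ω ∂μ, X i ω ≤ X (i - 1) ω) :
    ∀ n, ∀ᵐ ω ∂μ, X n ω ≤ N := by
  intro n
  induction n with
  | zero => filter_upwards [h0] with ω h using h.le
  | succ n ih =>
    have h := hmono (n+1) (by omega)
    simp only [Nat.add_sub_cancel] at h
    filter_upwards [h, ih] with ω h1 h2 using h1.trans h2

lemma my_int (μ : Measure Ω) [IsProbabilityMeasure μ] (X : ℕ → Ω → ℕ)
    (hX : ∀ i, Measurable (X i)) (N : ℕ)
    (hb : ∀ n, ∀ᵐ ω ∂μ, X n ω ≤ N) (n : ℕ) :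
    Integrable (fun ω => (X n ω : ℝ)) μ := by
  refine (integrable_const (N : ℝ)).mono'
    ((measurable_from_top.comp (hX n)).aestronglyMeasurable) ?_
  filter_upwards [hb n] with ω h
  rw [Real.norm_natCast]
  exact_mod_cast h

lemma my_step (μ : Measure Ω) [IsProbabilityMeasure μ]
    (X : ℕ → Ω → ℕ) (hX : ∀ i, Measurable (X i)) (ε' : ℝ)
    (hcond : ∀ i : ℕ, 1 ≤ i → ∀ x : ℕ → ℕ,
        μ {ω | ∀ j ≤ i - 1, X j ω = x j} ≠ 0 →
        ∫ ω, (X i ω : ℝ) ∂(μ[|{ω | ∀ j ≤ i - 1, X j ω = x j}]) ≤ (1 - ε') * x (i - 1))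
    (hint : ∀ n, Integrable (fun ω => (X n ω : ℝ)) μ)
    (i : ℕ) (hi : 1 ≤ i) :
    ∫ ω, (X i ω : ℝ) ∂μ ≤ (1 - ε') * ∫ ω, (X (i-1) ω : ℝ) ∂μ := by
  classical
  set xv : (Fin i → ℕ) → ℕ → ℕ := fun v j => if h : j < i then v ⟨j, h⟩ else 0 with hxv
  set A : (Fin i → ℕ) → Set Ω := fun v => {ω | ∀ j ≤ i - 1, X j ω = xv v j} with hA
  have hjlt : ∀ j : ℕ, j ≤ i - 1 ↔ j < i := fun j => (Nat.lt_iff_le_pred hi).symm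
  have hAmeas : ∀ v, MeasurableSet (A v) := by
    intro v
    have : A v = ⋂ j, ⋂ (_ : j ≤ i - 1), {ω | X j ω = xv v j} := by
      ext ω; simp [hA, Set.mem_iInter]
    rw [this]
    exact MeasurableSet.iInter fun j => MeasurableSet.iInter fun _ =>
      (hX j) (measurableSet_singleton _)
  have hcover : ⋃ v, A v = Set.univ := by
    refine Set.eq_univ_of_forall fun ω => Set.mem_iUnion.2 ⟨fun j => X j ω, ?_⟩
    intro j hj
    have hj' : j < i := (hjlt j).1 hj
    simp [hxv, hj']
  have hdisj : Pairwise (Function.onFun Disjoint A) := by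
    intro v w hvw
    refine Set.disjoint_left.mpr fun ω hv hw => hvw ?_
    funext j
    have h1 := hv j ((hjlt j).2 j.isLt)
    have h2 := hw j ((hjlt j).2 j.isLt)
    rw [h1] at h2
    simpa [hxv, j.isLt] using h2
  have hconst : ∀ v, ∀ ω ∈ A v, X (i-1) ω = xv v (i-1) := fun v ω h => h (i-1) le_rfl
  have hterm : ∀ v, ∫ ω in A v, (X i ω : ℝ) ∂μ ≤ (1 - ε') * ∫ ω in A v, (X (i-1) ω : ℝ) ∂μ := by
    intro v
    by_cases hz : μ (A v) = 0
    · rw [Measure.restrict_eq_zero.mpr hz]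
      simp
    · have hne : μ (A v) ≠ ⊤ := measure_ne_top μ _
      have htr : 0 < (μ (A v)).toReal := ENNReal.toReal_pos hz hne
      have hI2 : ∫ ω in A v, (X (i-1) ω : ℝ) ∂μ = (μ (A v)).toReal * (xv v (i-1) : ℝ) := by
        rw [setIntegral_congr_fun (hAmeas v) (g := fun _ => (xv v (i-1) : ℝ))
          (fun ω h => by rw [hconst v ω h]), setIntegral_const, smul_eq_mul, Measure.real]
      have hIC : ∫ ω, (X i ω : ℝ) ∂(μ[|A v]) =
          (μ (A v)).toReal⁻¹ * ∫ ω in A v, (X i ω : ℝ) ∂μ := by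
        rw [ProbabilityTheory.cond, integral_smul_measure, ENNReal.toReal_inv, smul_eq_mul]
      have hc := hcond i hi (xv v) hz
      rw [hIC] at hc
      have hmul := mul_le_mul_of_nonneg_left hc htr.le
      rw [← mul_assoc, mul_inv_cancel₀ htr.ne', one_mul] at hmul
      rw [hI2]
      calc ∫ ω in A v, (X i ω : ℝ) ∂μ ≤ (μ (A v)).toReal * ((1 - ε') * (xv v (i-1) : ℝ)) := hmul
        _ = (1 - ε') * ((μ (A v)).toReal * (xv v (i-1) : ℝ)) := by ring
  have hs1 : HasSum (fun v => ∫ ω in A v, (X i ω : ℝ) ∂μ) (∫ ω, (X i ω : ℝ) ∂μ) := by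
    have h := hasSum_integral_iUnion hAmeas hdisj ((hint i).integrableOn)
    rwa [hcover, Measure.restrict_univ] at h
  have hs2 : HasSum (fun v => ∫ ω in A v, (X (i-1) ω : ℝ) ∂μ) (∫ ω, (X (i-1) ω : ℝ) ∂μ) := by
    have h := hasSum_integral_iUnion hAmeas hdisj ((hint (i-1)).integrableOn)
    rwa [hcover, Measure.restrict_univ] at h
  exact hasSum_le hterm hs1 (hs2.mul_left (1 - ε'))

lemma my_markov (μ : Measure Ω) [IsProbabilityMeasure μ]
    (X : ℕ → Ω → ℕ) (hX : ∀ i, Measurable (X i)) (n : ℕ)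
    (hint : Integrable (fun ω => (X n ω : ℝ)) μ) (B : ℝ)
    (hdec : ∫ ω, (X n ω : ℝ) ∂μ ≤ B) :
    μ {ω | X n ω ≠ 0} ≤ ENNReal.ofReal B := by
  have hsub : {ω | X n ω ≠ 0} ⊆ {ω | (1:ENNReal) ≤ (X n ω : ENNReal)} := by
    intro ω h
    simp only [Set.mem_setOf_eq] at *
    exact_mod_cast Nat.one_le_iff_ne_zero.mpr h
  calc μ {ω | X n ω ≠ 0} ≤ μ {ω | (1:ENNReal) ≤ (X n ω : ENNReal)} := measure_mono hsub
    _ = 1 * μ {ω | (1:ENNReal) ≤ (X n ω : ENNReal)} := (one_mul _).symm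
    _ ≤ ∫⁻ ω, (X n ω : ENNReal) ∂μ :=
        mul_meas_ge_le_lintegral₀ ((measurable_from_top.comp (hX n)).aemeasurable) 1
    _ = ∫⁻ ω, ENNReal.ofReal ((X n ω : ℝ)) ∂μ := by
        refine lintegral_congr fun ω => ?_
        rw [ENNReal.ofReal_natCast]
    _ = ENNReal.ofReal (∫ ω, (X n ω : ℝ) ∂μ) :=
        (ofReal_integral_eq_lintegral_ofReal hint (ae_of_all _ fun ω => Nat.cast_nonneg _)).symm
    _ ≤ ENNReal.ofReal B := ENNReal.ofReal_le_ofReal hdec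

lemma my_T_meas (X : ℕ → Ω → ℕ) (hX : ∀ i, Measurable (X i))
    (T : Ω → ℕ) (hT : ∀ ω, T ω = sInf {i | X i ω = 0}) : Measurable T := by
  apply measurable_to_countable'
  intro k
  have hset : T ⁻¹' {k} =
      {ω | ∀ j, j < k → X j ω ≠ 0} ∩ ({ω | X k ω = 0} ∪ {ω | k = 0 ∧ ∀ i, X i ω ≠ 0}) := by
    ext ω
    simp only [Set.mem_preimage, Set.mem_singleton_iff, Set.mem_inter_iff, Set.mem_setOf_eq,
      Set.mem_union]
    rw [hT ω]
    constructor
    · intro hk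
      subst hk
      constructor
      · intro j hj hj0
        have hle : sInf {i | X i ω = 0} ≤ j := Nat.sInf_le (show j ∈ {i | X i ω = 0} from hj0)
        omega
      · by_cases hne : {i | X i ω = 0}.Nonempty
        · exact Or.inl (Nat.sInf_mem hne)
        · refine Or.inr ⟨?_, fun i hi => hne ⟨i, hi⟩⟩
          rw [Set.not_nonempty_iff_eq_empty.mp hne, Nat.sInf_empty]
    · rintro ⟨hlow, hk | ⟨hk0, hall⟩⟩
      · refine le_antisymm (Nat.sInf_le (show k ∈ {i | X i ω = 0} from hk)) ?_
        by_contra h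
        push_neg at h
        exact hlow _ h (Nat.sInf_mem (⟨k, hk⟩ : {i | X i ω = 0}.Nonempty))
      · have he : {i | X i ω = 0} = ∅ := Set.eq_empty_iff_forall_notMem.mpr hall
        rw [he, Nat.sInf_empty, hk0]
  rw [hset]
  refine MeasurableSet.inter ?_ (MeasurableSet.union ((hX k) (measurableSet_singleton 0)) ?_)
  · have h : {ω | ∀ j, j < k → X j ω ≠ 0} = ⋂ j, ⋂ (_ : j < k), {ω | X j ω = 0}ᶜ := by
      ext ω; simp
    rw [h]
    exact MeasurableSet.iInter fun j => MeasurableSet.iInter fun _ =>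
      ((hX j) (measurableSet_singleton 0)).compl
  · by_cases hk : k = 0
    · have h : {ω | k = 0 ∧ ∀ i, X i ω ≠ 0} = ⋂ i, {ω | X i ω = 0}ᶜ := by
        ext ω; simp [hk]
      rw [h]
      exact MeasurableSet.iInter fun i => ((hX i) (measurableSet_singleton 0)).compl
    · have h : {ω | k = 0 ∧ ∀ i, X i ω ≠ 0} = ∅ := by
        ext ω; simp [hk]
      rw [h]; exact MeasurableSet.empty

lemma my_lint_T (μ : Measure Ω) (T : Ω → ℕ) (hTm : Measurable T) :
    ∫⁻ ω, (T ω : ENNReal) ∂μ = ∑' n : ℕ, μ {ω | n < T ω} := by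
  have hms : ∀ n : ℕ, MeasurableSet {ω | n < T ω} := fun n =>
    hTm (show MeasurableSet {m : ℕ | n < m} from trivial)
  have hTval : ∀ ω, (T ω : ENNReal) = ∑' n : ℕ, Set.indicator {ω' | n < T ω'} (fun _ => 1) ω := by
    intro ω
    have h1 : ∀ n : ℕ, Set.indicator {ω' | n < T ω'} (fun _ => (1:ENNReal)) ω
        = if n < T ω then 1 else 0 := by
      intro n; by_cases h : n < T ω <;> simp [Set.indicator, h]
    rw [tsum_congr h1]
    rw [tsum_eq_sum (s := Finset.range (T ω))
      (by intro n hn; simp [Finset.mem_range] at hn; simp [hn])]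
    rw [Finset.sum_ite_of_true (by simp), Finset.sum_const, Finset.card_range]
    simp
  calc ∫⁻ ω, (T ω : ENNReal) ∂μ
      = ∫⁻ ω, ∑' n : ℕ, Set.indicator {ω' | n < T ω'} (fun _ => 1) ω ∂μ :=
        lintegral_congr hTval
    _ = ∑' n : ℕ, ∫⁻ ω, Set.indicator {ω' | n < T ω'} (fun _ => 1) ω ∂μ :=
        lintegral_tsum fun n => ((measurable_const.indicator (hms n)).aemeasurable)
    _ = ∑' n : ℕ, μ {ω | n < T ω} := by
        refine tsum_congr fun n => ?_
        rw [lintegral_indicator (hms n)]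
        simp

end aux

lemma my_pow_bound (N : ℕ) (hN : 0 < N) (ε' : ℝ) (hε0 : 0 < ε') (hε1 : ε' < 1) :
    (1 - ε') ^ (⌈Real.log N / ε'⌉₊) * N ≤ 1 := by
  set m := ⌈Real.log N / ε'⌉₊
  have h1 : (1 - ε') ≤ Real.exp (-ε') := by
    have := Real.add_one_le_exp (-ε'); linarith
  have h2 : (1 - ε') ^ m ≤ Real.exp (-ε') ^ m :=
    pow_le_pow_left₀ (by linarith) h1 m
  have h3 : Real.exp (-ε') ^ m = Real.exp ((m : ℝ) * (-ε')) := by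
    rw [← Real.exp_nat_mul]
  have hm : Real.log N / ε' ≤ (m : ℝ) := Nat.le_ceil _
  have h4 : Real.log N ≤ (m : ℝ) * ε' := by
    have := (div_le_iff₀ hε0).mp hm; linarith
  have h5 : Real.exp ((m : ℝ) * (-ε')) ≤ Real.exp (-Real.log N) :=
    Real.exp_le_exp.mpr (by linarith)
  have h6 : Real.exp (-Real.log N) = (N : ℝ)⁻¹ := by
    rw [Real.exp_neg, Real.exp_log (by exact_mod_cast hN)]
  have hNpos : (0:ℝ) < N := by exact_mod_cast hN
  have h7 : (1 - ε') ^ m ≤ (N:ℝ)⁻¹ := by rw [← h6]; linarith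
  calc (1 - ε') ^ m * N ≤ (N:ℝ)⁻¹ * N := by nlinarith
    _ = 1 := inv_mul_cancel₀ hNpos.ne'

lemma my_geom (ε' : ℝ) (hε0 : 0 < ε') (hε1 : ε' < 1) :
    ∑' n : ℕ, ENNReal.ofReal ((1 - ε') ^ n) = ENNReal.ofReal (1 / ε') := by
  have h1 : ∀ n : ℕ, ENNReal.ofReal ((1 - ε') ^ n) = ENNReal.ofReal (1 - ε') ^ n := fun n =>
    ENNReal.ofReal_pow (by linarith) n
  rw [tsum_congr h1, ENNReal.tsum_geometric]
  have h2 : 1 - ENNReal.ofReal (1 - ε') = ENNReal.ofReal ε' := by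
    rw [← ENNReal.ofReal_one, ← ENNReal.ofReal_sub _ (by linarith)]
    norm_num
  rw [h2, ← ENNReal.ofReal_inv_of_pos hε0, one_div]

/-- Decreasing nonnegative integer process with geometric-type conditional decay:
if `X 0 = N`, `X i ≤ X (i-1)` a.s., and conditioned on any history
`X 0 = x 0, X 1 = x 1, …, X (i-1) = x (i-1)` of positive probability the conditional
expectation of `X i` is at most `(1-ε')·x (i-1)`, then the first hitting time `T`
of `0` satisfies `E[T] ≤ C·(log N + 1)/ε'²` for an absolute constant `C`. -/
theorem stmt_6 :
    ∃ C : ℝ, 0 < C ∧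
      ∀ (Ω : Type) (_ : MeasurableSpace Ω) (μ : Measure Ω), IsProbabilityMeasure μ →
      ∀ (X : ℕ → Ω → ℕ), (∀ i, Measurable (X i)) →
      ∀ (N : ℕ), 0 < N →
      ∀ (ε' : ℝ), 0 < ε' → ε' < 1 →
      (∀ᵐ ω ∂μ, X 0 ω = N) →
      (∀ i : ℕ, 1 ≤ i → ∀ᵐ ω ∂μ, X i ω ≤ X (i - 1) ω) →
      (∀ i : ℕ, 1 ≤ i → ∀ x : ℕ → ℕ,
        μ {ω | ∀ j ≤ i - 1, X j ω = x j} ≠ 0 →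
        ∫ ω, (X i ω : ℝ) ∂(μ[|{ω | ∀ j ≤ i - 1, X j ω = x j}]) ≤
          (1 - ε') * x (i - 1)) →
      ∀ (T : Ω → ℕ), (∀ ω, T ω = sInf {i | X i ω = 0}) →
      ∫ ω, (T ω : ℝ) ∂μ ≤ C * (Real.log N + 1) / ε' ^ 2 := by
  refine ⟨3, by norm_num, ?_⟩
  intro Ω mΩ μ hμ X hX N hN ε' hε0 hε1 h0 hmono hcond T hT
  have hb := my_ae_bound μ X N h0 hmono
  have hint := fun n => my_int μ X hX N hb n
  have hdecay : ∀ n, ∫ ω, (X n ω : ℝ) ∂μ ≤ (1 - ε') ^ n * N := by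
    intro n
    induction n with
    | zero =>
      rw [integral_congr_ae (g := fun _ => (N:ℝ)) (h0.mono fun ω h => by rw [h])]
      simp
    | succ n ih =>
      have hstep := my_step μ X hX ε' hcond hint (n+1) (by omega)
      simp only [Nat.add_sub_cancel] at hstep
      calc ∫ ω, (X (n+1) ω : ℝ) ∂μ ≤ (1-ε') * ∫ ω, (X n ω : ℝ) ∂μ := hstep
        _ ≤ (1-ε') * ((1-ε')^n * N) := mul_le_mul_of_nonneg_left ih (by linarith)
        _ = (1-ε')^(n+1) * N := by ring
  have hTm : Measurable T := my_T_meas X hX T hT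
  have hμT : ∀ n, μ {ω | n < T ω} ≤ ENNReal.ofReal ((1-ε')^n * N) := by
    intro n
    have hsub0 : {ω | n < T ω} ⊆ {ω | X n ω ≠ 0} := by
      intro ω h
      simp only [Set.mem_setOf_eq] at *
      intro h0'
      have hle := Nat.sInf_le (show n ∈ {i | X i ω = 0} from h0')
      rw [← hT ω] at hle; omega
    exact (measure_mono hsub0).trans (my_markov μ X hX n (hint n) _ (hdecay n))
  set m := ⌈Real.log N / ε'⌉₊ with hm
  have hNb : (1-ε')^m * N ≤ 1 := my_pow_bound N hN ε' hε0 hε1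
  have htail : ∑' n : ℕ, μ {ω | n < T ω} ≤ (m : ENNReal) + ENNReal.ofReal (1/ε') := by
    rw [← Summable.sum_add_tsum_nat_add' (f := fun n => μ {ω | n < T ω}) (k := m) ENNReal.summable]
    refine add_le_add ?_ ?_
    · calc ∑ i ∈ Finset.range m, μ {ω | i < T ω}
          ≤ ∑ _i ∈ Finset.range m, (1:ENNReal) := Finset.sum_le_sum fun i _ => prob_le_one
        _ = m := by simp
    · have hterm2 : ∀ n : ℕ, μ {ω | n + m < T ω} ≤ ENNReal.ofReal ((1-ε')^n) := by
        intro n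
        refine (hμT (n+m)).trans (ENNReal.ofReal_le_ofReal ?_)
        have h0n : (0:ℝ) ≤ (1-ε')^n := pow_nonneg (by linarith) n
        calc (1-ε')^(n+m) * N = (1-ε')^n * ((1-ε')^m * N) := by rw [pow_add]; ring
          _ ≤ (1-ε')^n * 1 := mul_le_mul_of_nonneg_left hNb h0n
          _ = (1-ε')^n := mul_one _
      calc ∑' n : ℕ, μ {ω | n + m < T ω} ≤ ∑' n : ℕ, ENNReal.ofReal ((1-ε')^n) :=
            ENNReal.tsum_le_tsum hterm2
        _ = ENNReal.ofReal (1/ε') := my_geom ε' hε0 hε1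
  have hInt : ∫ ω, (T ω : ℝ) ∂μ = (∫⁻ ω, (T ω : ENNReal) ∂μ).toReal := by
    rw [integral_eq_lintegral_of_nonneg_ae (ae_of_all _ fun ω => Nat.cast_nonneg _)
      ((measurable_from_top.comp hTm).aestronglyMeasurable)]
    congr 1
    exact lintegral_congr fun ω => by rw [ENNReal.ofReal_natCast]
  rw [hInt, my_lint_T μ T hTm]
  have hfin : (m : ENNReal) + ENNReal.ofReal (1/ε') ≠ ⊤ :=
    ENNReal.add_ne_top.mpr ⟨ENNReal.natCast_ne_top m, ENNReal.ofReal_ne_top⟩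
  have hmono' := ENNReal.toReal_mono hfin htail
  refine hmono'.trans ?_
  have htr : ((m : ENNReal) + ENNReal.ofReal (1/ε')).toReal = (m : ℝ) + 1/ε' := by
    rw [ENNReal.toReal_add (ENNReal.natCast_ne_top m) ENNReal.ofReal_ne_top,
      ENNReal.toReal_natCast, ENNReal.toReal_ofReal (by positivity)]
  rw [htr]
  have hlog : 0 ≤ Real.log N := Real.log_nonneg (by exact_mod_cast hN)
  have hmle : (m:ℝ) ≤ Real.log N / ε' + 1 := (Nat.ceil_lt_add_one (by positivity)).le
  have hsq : (0:ℝ) < ε'^2 := by positivity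
  have hsqle : ε'^2 ≤ ε' := by nlinarith
  have h1e : 1 ≤ 1/ε' := by rw [le_div_iff₀ hε0]; linarith
  rw [mul_div_assoc]
  set E := (Real.log N + 1)/ε'^2 with hE
  have hE1 : (Real.log N + 1)/ε' ≤ E := by
    rw [hE]
    gcongr
  have hE2 : 1/ε' ≤ E := by
    have ha : 1/ε' ≤ 1/ε'^2 := one_div_le_one_div_of_le hsq hsqle
    have hb2 : 1/ε'^2 ≤ E := by rw [hE]; gcongr; linarith
    linarith
  have hadd : (Real.log N + 1)/ε' = Real.log N/ε' + 1/ε' := add_div _ _ _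
  linarith
end

section
/- Let f : 2^V → ℝ be monotone submodular, G ⊆ V, τ > 0, and let s₁,…,s_m be a random ordering of a uniform random m-subset S of a finite set R ⊆ V. If P(f(s_m | G ∪ {s₁,…,s_{m−1}}) ≥ τ) ≥ 1 − ε, then E[min{f(S|G), m·τ}] ≥ (1−ε)·m·τ. -/
/-!
By submodularity, the leave-one-out gains `f(x | G ∪ S \ {x})`, `x ∈ S`, sum to at most `f(S | G)`:
removing the elements of `S` one at a time, the gain of each removed element is at most its
gain with respect to the (smaller) set that remains, and these gains telescope. A position whose
leave-one-out gain is at least `τ` therefore contributes `τ` both to `f(S | G)` and to `m τ`.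
Since relabelling positions preserves the uniform distribution on orderings, every position has
the same chance as the last one of having gain at least `τ`, so in expectation at least `(1 − ε) m`
positions contribute.
-/

open Finset

section Submodular

variable {V : Type*} [DecidableEq V] {f : Finset V → ℝ}

theorem sub_insert_le_of_subset
    (hsub : ∀ A B : Finset V, f (A ∪ B) + f (A ∩ B) ≤ f A + f B)
    (hmono : ∀ A B : Finset V, A ⊆ B → f A ≤ f B)
    {A B : Finset V} (hAB : A ⊆ B) (x : V) :
    f (insert x B) - f B ≤ f (insert x A) - f A := by
  have hunion : insert x A ∪ B = insert x B := by
    rw [insert_union, union_eq_right.2 hAB]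
  have hinter : A ⊆ insert x A ∩ B := subset_inter (subset_insert x A) hAB
  have := hsub (insert x A) B
  rw [hunion] at this
  linarith [hmono _ _ hinter]

theorem sum_sub_erase_le
    (hsub : ∀ A B : Finset V, f (A ∪ B) + f (A ∩ B) ≤ f A + f B)
    (hmono : ∀ A B : Finset V, A ⊆ B → f A ≤ f B) (G S : Finset V) :
    ∑ x ∈ S, (f (S ∪ G) - f (S.erase x ∪ G)) ≤ f (S ∪ G) - f G := by
  induction S using Finset.induction_on with
  | empty => simp
  | insert a T ha ih =>
    have hgain : ∀ x ∈ T, f (insert a T ∪ G) - f ((insert a T).erase x ∪ G)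
        ≤ f (T ∪ G) - f (T.erase x ∪ G) := by
      intro x hx
      have hsmaller : T.erase x ∪ G ⊆ (insert a T).erase x ∪ G :=
        union_subset_union_left (erase_subset_erase x (subset_insert a T))
      have hxT : insert x (T.erase x ∪ G) = T ∪ G := by
        rw [← insert_union, insert_erase hx]
      have hxS : insert x ((insert a T).erase x ∪ G) = insert a T ∪ G := by
        rw [← insert_union, insert_erase (mem_insert_of_mem hx)]
      simpa only [hxT, hxS] using sub_insert_le_of_subset hsub hmono hsmaller x
    rw [sum_insert ha, erase_insert ha]
    linarith [sum_le_sum hgain]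

end Submodular

theorem sum_ite_le_min {ι : Type*} (s : Finset ι) {b : ι → ℝ} (hb : ∀ i ∈ s, 0 ≤ b i)
    {τ : ℝ} (hτ : 0 ≤ τ) :
    ∑ i ∈ s, (if τ ≤ b i then τ else 0) ≤ min (∑ i ∈ s, b i) (#s * τ) := by
  refine le_min (sum_le_sum fun i hi => ?_) ?_
  · split_ifs with h
    · exact h
    · exact hb i hi
  · rw [← nsmul_eq_mul, ← sum_const]
    exact sum_le_sum fun i _ => by split_ifs <;> linarith

theorem exists_injective_forall_mem {V : Type*} {m : ℕ} (R : Finset V) (h : m ≤ #R) :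
    ∃ σ : Fin m → V, Function.Injective σ ∧ ∀ i, σ i ∈ R := by
  obtain ⟨e⟩ := Function.Embedding.nonempty_of_card_le (α := Fin m) (β := R) (by simpa using h)
  exact ⟨fun i => e i, Subtype.val_injective.comp e.injective, fun i => (e i).2⟩

section Orderings

variable {V : Type*} [DecidableEq V] {m : ℕ}

theorem image_comp_perm (σ : Fin m → V) (π : Equiv.Perm (Fin m)) :
    image (σ ∘ π) univ = image σ univ := by
  rw [← image_image, image_univ_equiv]

theorem sum_apply_eq_of_comp_perm_mem {β : Type*} [AddCommMonoid β] {s : Finset (Fin m → V)}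
    (hs : ∀ σ ∈ s, ∀ π : Equiv.Perm (Fin m), σ ∘ π ∈ s) (φ : Finset V → V → β) (j k : Fin m) :
    ∑ σ ∈ s, φ (image σ univ) (σ j) = ∑ σ ∈ s, φ (image σ univ) (σ k) := by
  refine sum_nbij' (· ∘ Equiv.swap j k) (· ∘ Equiv.swap j k) (fun σ hσ => hs σ hσ _)
    (fun σ hσ => hs σ hσ _) (fun σ _ => ?_) (fun σ _ => ?_) (fun σ _ => ?_)
  · ext i; simp
  · ext i; simp
  · simp [image_comp_perm]

end Orderings

theorem stmt_14_general {V : Type*} [Fintype V] [DecidableEq V] (f : Finset V → ℝ)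
    (hsub : ∀ A B : Finset V, f (A ∪ B) + f (A ∩ B) ≤ f A + f B)
    (hmono : ∀ A B : Finset V, A ⊆ B → f A ≤ f B)
    (G R : Finset V) (τ : ℝ) (hτ : 0 < τ)
    (m : ℕ) (hmR : m ≤ R.card)
    (ε : ℝ)
    (E : Finset (Fin m → V))
    (hE : E = Finset.univ.filter fun σ : Fin m → V =>
      Function.Injective σ ∧ ∀ i, σ i ∈ R)
    (last : Fin m)
    (hprob : ((E.filter fun σ =>
        τ ≤ f (Finset.image σ Finset.univ ∪ G) -
            f ((Finset.image σ Finset.univ).erase (σ last) ∪ G)).card : ℝ)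
      ≥ (1 - ε) * E.card) :
    (∑ σ ∈ E, min (f (Finset.image σ Finset.univ ∪ G) - f G) (m * τ)) / E.card
      ≥ (1 - ε) * (m * τ) := by
  have hperm : ∀ σ ∈ E, ∀ π : Equiv.Perm (Fin m), σ ∘ π ∈ E := by
    intro σ hσ π
    rw [hE, mem_filter] at hσ ⊢
    exact ⟨mem_univ _, hσ.2.1.comp π.injective, fun i => hσ.2.2 _⟩
  have hEpos : (0 : ℝ) < #E := by
    obtain ⟨σ, hinj, hR⟩ := exists_injective_forall_mem R hmR
    exact_mod_cast card_pos.2 ⟨σ, by simp [hE, hinj, hR]⟩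
  set gain : Finset V → V → ℝ := fun S x => f (S ∪ G) - f (S.erase x ∪ G)
  have hcount : ∀ j, ∑ σ ∈ E, (if τ ≤ gain (image σ univ) (σ j) then τ else 0)
      = #(E.filter fun σ => τ ≤ gain (image σ univ) (σ last)) * τ := by
    intro j
    rw [sum_apply_eq_of_comp_perm_mem hperm (fun S x => if τ ≤ gain S x then τ else 0) j last,
      ← sum_filter, sum_const, nsmul_eq_mul]
  have hpoint : ∀ σ ∈ E, ∑ j, (if τ ≤ gain (image σ univ) (σ j) then τ else 0)
      ≤ min (f (image σ univ ∪ G) - f G) (m * τ) := by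
    intro σ hσ
    have hinj : Function.Injective σ := by
      rw [hE, mem_filter] at hσ
      exact hσ.2.1
    have hgain_nonneg : ∀ j ∈ univ, 0 ≤ gain (image σ univ) (σ j) := fun j _ =>
      sub_nonneg.2 (hmono _ _ (union_subset_union_left (erase_subset _ _)))
    calc _ ≤ min (∑ j, gain (image σ univ) (σ j)) (#(univ : Finset (Fin m)) * τ) :=
          sum_ite_le_min _ hgain_nonneg hτ.le
      _ ≤ _ := by
        rw [card_univ, Fintype.card_fin, ← sum_image fun i _ j _ h => hinj h]
        exact min_le_min_right _ (sum_sub_erase_le hsub hmono G _)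
  rw [ge_iff_le, le_div_iff₀ hEpos]
  calc (1 - ε) * (m * τ) * #E = ∑ _j : Fin m, (1 - ε) * #E * τ := by
        rw [sum_const, card_univ, Fintype.card_fin, nsmul_eq_mul]
        ring
    _ ≤ ∑ j : Fin m, ∑ σ ∈ E, (if τ ≤ gain (image σ univ) (σ j) then τ else 0) := by
        gcongr with j
        rw [hcount]
        exact mul_le_mul_of_nonneg_right hprob hτ.le
    _ = ∑ σ ∈ E, ∑ j, (if τ ≤ gain (image σ univ) (σ j) then τ else 0) := sum_comm
    _ ≤ _ := sum_le_sum hpoint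

/-- If the last element of a uniformly random ordering of a uniform random
`m`-subset `S` of `R` has marginal gain at least `τ` with probability at least
`1 − ε`, then `E[min{f(S|G), m·τ}] ≥ (1−ε)·m·τ`.  The random ordering is
modelled as a uniform injective sequence `σ : Fin m → V` with values in `R`,
with `S = image σ` and last element `σ last`. -/
theorem stmt_14 {V : Type*} [Fintype V] [DecidableEq V] (f : Finset V → ℝ)
    (hsub : ∀ A B : Finset V, f (A ∪ B) + f (A ∩ B) ≤ f A + f B)
    (hmono : ∀ A B : Finset V, A ⊆ B → f A ≤ f B)
    (G R : Finset V) (τ : ℝ) (hτ : 0 < τ)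
    (m : ℕ) (hm : 1 ≤ m) (hmR : m ≤ R.card)
    (ε : ℝ) (hε0 : 0 ≤ ε) (hε1 : ε ≤ 1)
    (E : Finset (Fin m → V))
    (hE : E = Finset.univ.filter fun σ : Fin m → V =>
      Function.Injective σ ∧ ∀ i, σ i ∈ R)
    (last : Fin m) (hlast : (last : ℕ) = m - 1)
    (hprob : ((E.filter fun σ =>
        τ ≤ f (Finset.image σ Finset.univ ∪ G) -
            f ((Finset.image σ Finset.univ).erase (σ last) ∪ G)).card : ℝ)
      ≥ (1 - ε) * E.card) :
    (∑ σ ∈ E, min (f (Finset.image σ Finset.univ ∪ G) - f G) (m * τ)) / E.card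
      ≥ (1 - ε) * (m * τ) :=
  stmt_14_general f hsub hmono G R τ hτ m hmR ε E hE last hprob
end
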